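/- arXiv:2601.22006 — 7 statements merged into one kernel-verified Lean document; each statement's English description precedes it below -/
import Mathlib

section
/- Let G be a group, g ∈ G, n ∈ ℕ, y : Fin n → Bool and r : Fin n → ℕ. Put c₁ := g^{ι(y)} and, for each i < n, c₂(i) := (g^{r i})^{ι(y)} · g^{bit(y,i)} (that is, (c₁, c₂) is the EEK concept c_y evaluated at the inputs h_i = g^{r i}). Then for every i < n one has c₂(i) · (c₁^{r i})⁻¹ = g^{bit(y,i)}. If moreover g ≠ 1, then for every i < n: y i = true if and only if c₂(i) · (c₁^{r i})⁻¹ = g. -/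
/-- `iota y` is the natural number whose binary digits are given by `y`. -/
def iota {n : ℕ} (y : Fin n → Bool) : ℕ :=
  ∑ i : Fin n, if y i then 2 ^ (n - 1 - (i : ℕ)) else 0

/-- Key-bit extraction for the ElGamal Encrypted Key (EEK) concept: with
`c₁ = g ^ iota y` and `c₂ i = (g ^ r i) ^ iota y * g ^ bit(y,i)`, one has
`c₂ i * (c₁ ^ r i)⁻¹ = g ^ bit(y,i)`, and if `g ≠ 1` then
`y i = true ↔ c₂ i * (c₁ ^ r i)⁻¹ = g`. -/
theorem stmt1 {G : Type*} [Group G] (g : G) (n : ℕ) (y : Fin n → Bool) (r : Fin n → ℕ)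
    (c₁ : G) (c₂ : Fin n → G)
    (hc₁ : c₁ = g ^ iota y)
    (hc₂ : ∀ i : Fin n, c₂ i = (g ^ r i) ^ iota y * g ^ (if y i then 1 else 0)) :
    (∀ i : Fin n, c₂ i * (c₁ ^ r i)⁻¹ = g ^ (if y i then 1 else 0)) ∧
    (g ≠ 1 → ∀ i : Fin n, (y i = true ↔ c₂ i * (c₁ ^ r i)⁻¹ = g)) := by
  have key : ∀ i : Fin n, c₂ i * (c₁ ^ r i)⁻¹ = g ^ (if y i then 1 else 0) := by
    intro i
    rw [hc₂ i, hc₁, ← pow_mul, ← pow_mul, Nat.mul_comm]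
    group
  refine ⟨key, fun hg i => ?_⟩
  rw [key i]
  cases h : y i with
  | false => simp [h, Ne.symm hg]
  | true => simp [h]
end

section
/- Let G be a group and g ∈ G with g ≠ 1, and let n ∈ ℕ. Define the decoder D : (Fin n → ℕ) → (G × (Fin n → G)) → (Fin n → Bool) by D r (c₁, c₂) i := decide (c₂ i · (c₁ ^ (r i))⁻¹ = g). Then for every secret key y : Fin n → Bool and every r : Fin n → ℕ, applying D to r and to the EEK concept value c_y(g^{r 0}, …, g^{r (n−1)}) recovers y exactly: D r (c_y(g^{r 0}, …, g^{r (n−1)})) = y. In other words, given the discrete logarithms r of the inputs (the privileged features), a single labeled EEK example determines the secret key y bit-by-bit. -/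
/-- The ElGamal Encrypted Key (EEK) concept `c_y` evaluated at inputs `h`. -/
def eek {G : Type*} [Group G] {n : ℕ} (g : G) (y : Fin n → Bool) (h : Fin n → G) :
    G × (Fin n → G) :=
  (g ^ iota y, fun i => h i ^ iota y * g ^ (if y i then 1 else 0))

/-- The decoder `D`, using the discrete logarithms `r` of the inputs. -/
def decoder {G : Type*} [Group G] [DecidableEq G] {n : ℕ} (g : G)
    (r : Fin n → ℕ) (c : G × (Fin n → G)) : Fin n → Bool :=
  fun i => decide (c.2 i * (c.1 ^ r i)⁻¹ = g)

/-- Given the discrete logarithms `r` of the inputs as privileged features, a single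
labeled EEK example determines the secret key `y` bit-by-bit. -/
theorem stmt2 {G : Type*} [Group G] [DecidableEq G] (g : G) (hg : g ≠ 1) (n : ℕ)
    (y : Fin n → Bool) (r : Fin n → ℕ) :
    decoder g r (eek g y (fun i => g ^ r i)) = y := by
  funext i
  simp only [decoder, eek, ← pow_mul, ← pow_add]
  rw [Nat.mul_comm]
  cases hy : y i <;> simp [hy, pow_succ, Ne.symm hg, mul_assoc, Commute.self_pow g, (Commute.self_pow g _).inv_right.eq]
end

section
/- Fix n ≥ 1, m ≥ 1 and primes p, q with p = 2·q + 1 and 2^(n−1) ≤ q < 2^n, and let φ : (Fin m → Fin (2^(n+1))) → ZMod p be the rejection-sampling map. Then for every a ∈ ZMod p with a ^ q = 1 and a ≠ 1, the fiber of φ over a satisfies q · card(φ⁻¹(a)) = 2^((n+1)·m) − (2^(n+1) − q)^m. In particular, all fibers of φ over non-identity elements of the order-q subgroup of (ZMod p)ˣ have equal cardinality. -/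
/-- `v ∈ Fin (2^(n+1))` is valid if `1 ≤ v ≤ p - 1` and `(v : ZMod p) ^ q = 1`. -/
def Valid (p q n : ℕ) (v : Fin (2 ^ (n + 1))) : Prop :=
  1 ≤ (v : ℕ) ∧ (v : ℕ) ≤ p - 1 ∧ ((v : ℕ) : ZMod p) ^ q = 1

instance (p q n : ℕ) : DecidablePred (Valid p q n) := fun v => by
  unfold Valid; infer_instance

/-- The rejection-sampling map `φ`: the value of the first valid attempt, or `1` if
no attempt is valid. -/
def phi (p q n m : ℕ) (v : Fin m → Fin (2 ^ (n + 1))) : ZMod p :=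
  if h : (Finset.univ.filter (fun j : Fin m => Valid p q n (v j))).Nonempty then
    ((v ((Finset.univ.filter (fun j : Fin m => Valid p q n (v j))).min' h) : ℕ) : ZMod p)
  else 1

private lemma card_forall_filter {α : Type*} [Fintype α] [DecidableEq α] (m : ℕ)
    (P : α → Prop) [DecidablePred P] :
    (Finset.univ.filter (fun v : Fin m → α => ∀ j, P (v j))).card
      = (Finset.univ.filter P).card ^ m := by
  have h : (Finset.univ.filter (fun v : Fin m → α => ∀ j, P (v j)))
      = Fintype.piFinset (fun _ : Fin m => Finset.univ.filter P) := by
    ext v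
    simp [Fintype.mem_piFinset]
  rw [h, Fintype.card_piFinset]
  simp

private def Frep (p : ℕ) [NeZero p] {n : ℕ} (hplt : p < 2 ^ (n + 1)) (a : ZMod p) :
    Fin (2 ^ (n + 1)) :=
  ⟨a.val, lt_trans (ZMod.val_lt a) hplt⟩

private lemma cast_Frep (p : ℕ) [NeZero p] {n : ℕ} (hplt : p < 2 ^ (n + 1)) (a : ZMod p) :
    ((Frep p hplt a : ℕ) : ZMod p) = a := by
  simp [Frep, ZMod.natCast_val, ZMod.cast_id]

private lemma valid_Frep {p q n : ℕ} [Fact p.Prime] (hq0 : 0 < q) (hplt : p < 2 ^ (n + 1))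
    {a : ZMod p} (ha : a ^ q = 1) : Valid p q n (Frep p hplt a) := by
  have hp1 : 1 < p := (Fact.out : p.Prime).one_lt
  have ha0 : a ≠ 0 := by
    rintro rfl
    rw [zero_pow hq0.ne'] at ha
    exact zero_ne_one ha
  have hv0 : a.val ≠ 0 := by simpa [ZMod.val_eq_zero] using ha0
  have hvlt : a.val < p := ZMod.val_lt a
  refine ⟨by simpa [Frep] using Nat.one_le_iff_ne_zero.mpr hv0, ?_, ?_⟩
  · show a.val ≤ p - 1
    omega
  · show ((a.val : ℕ) : ZMod p) ^ q = 1
    rw [show ((a.val : ℕ) : ZMod p) = a from cast_Frep p hplt a]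
    exact ha

private lemma Frep_cast {p q n : ℕ} [Fact p.Prime] (hplt : p < 2 ^ (n + 1))
    {v : Fin (2 ^ (n + 1))} (hv : Valid p q n v) :
    Frep p hplt (((v : ℕ) : ZMod p)) = v := by
  have hp1 : 1 < p := (Fact.out : p.Prime).one_lt
  have hlt : (v : ℕ) < p := by have := hv.2.1; omega
  apply Fin.ext
  simp [Frep, ZMod.val_cast_of_lt hlt]

private lemma valid_swap {p q n : ℕ} [Fact p.Prime] (hq0 : 0 < q) (hplt : p < 2 ^ (n + 1))
    {a b : ZMod p} (ha : a ^ q = 1) (hb : b ^ q = 1) (x : Fin (2 ^ (n + 1))) :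
    Valid p q n (Equiv.swap (Frep p hplt a) (Frep p hplt b) x) ↔ Valid p q n x := by
  rcases eq_or_ne x (Frep p hplt a) with rfl | hxa
  · simp only [Equiv.swap_apply_left]
    exact ⟨fun _ => valid_Frep hq0 hplt ha, fun _ => valid_Frep hq0 hplt hb⟩
  rcases eq_or_ne x (Frep p hplt b) with rfl | hxb
  · simp only [Equiv.swap_apply_right]
    exact ⟨fun _ => valid_Frep hq0 hplt hb, fun _ => valid_Frep hq0 hplt ha⟩
  · rw [Equiv.swap_apply_of_ne_of_ne hxa hxb]

private lemma phi_pow {p q n m : ℕ} (v : Fin m → Fin (2 ^ (n + 1))) :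
    (phi p q n m v) ^ q = 1 := by
  unfold phi
  split
  · next h =>
    exact (Finset.mem_filter.mp (Finset.min'_mem _ h)).2.2.2
  · exact one_pow q

private lemma filter_swap_eq {p q n m : ℕ} [Fact p.Prime] (hq0 : 0 < q)
    (hplt : p < 2 ^ (n + 1)) {a b : ZMod p} (ha : a ^ q = 1) (hb : b ^ q = 1)
    (v : Fin m → Fin (2 ^ (n + 1))) :
    (Finset.univ.filter (fun j : Fin m =>
        Valid p q n (Equiv.swap (Frep p hplt a) (Frep p hplt b) (v j))))
      = Finset.univ.filter (fun j : Fin m => Valid p q n (v j)) := by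
  ext j
  simp [valid_swap hq0 hplt ha hb]

private lemma phi_swap {p q n m : ℕ} [Fact p.Prime] (hq0 : 0 < q) (hplt : p < 2 ^ (n + 1))
    {a b : ZMod p} (ha : a ^ q = 1) (hb : b ^ q = 1) (v : Fin m → Fin (2 ^ (n + 1)))
    (hne : (Finset.univ.filter (fun j : Fin m => Valid p q n (v j))).Nonempty)
    (hv : phi p q n m v = a) :
    phi p q n m (fun j => Equiv.swap (Frep p hplt a) (Frep p hplt b) (v j)) = b := by
  have hf := filter_swap_eq (m := m) hq0 hplt ha hb v
  unfold phi
  simp only [hf]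
  rw [dif_pos hne]
  set j0 := (Finset.univ.filter (fun j : Fin m => Valid p q n (v j))).min' hne with hj0
  have hval : Valid p q n (v j0) := (Finset.mem_filter.mp (Finset.min'_mem _ hne)).2
  have hcast : ((v j0 : ℕ) : ZMod p) = a := by
    rw [← hv]
    unfold phi
    rw [dif_pos hne]
  have hva : v j0 = Frep p hplt a := by
    rw [← Frep_cast hplt hval, hcast]
  rw [hva, Equiv.swap_apply_left, cast_Frep]

/-- The fibers of the rejection-sampling map over non-identity elements `a` of the
order-`q` subgroup satisfy `q * card(φ⁻¹(a)) = 2^((n+1)m) - (2^(n+1) - q)^m`; in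
particular they all have equal cardinality. -/
theorem stmt5 (n m p q : ℕ) (hn : 1 ≤ n) (hm : 1 ≤ m) (hp : p.Prime) (hq : q.Prime)
    (hpq : p = 2 * q + 1) (hq1 : 2 ^ (n - 1) ≤ q) (hq2 : q < 2 ^ n) :
    (∀ a : ZMod p, a ^ q = 1 → a ≠ 1 →
      q * (Finset.univ.filter (fun v : Fin m → Fin (2 ^ (n + 1)) =>
            phi p q n m v = a)).card
        = 2 ^ ((n + 1) * m) - (2 ^ (n + 1) - q) ^ m) ∧
    (∀ a a' : ZMod p, a ^ q = 1 → a ≠ 1 → a' ^ q = 1 → a' ≠ 1 →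
      (Finset.univ.filter (fun v : Fin m → Fin (2 ^ (n + 1)) => phi p q n m v = a)).card
        = (Finset.univ.filter (fun v : Fin m → Fin (2 ^ (n + 1)) =>
            phi p q n m v = a')).card) := by
  classical
  haveI : Fact p.Prime := ⟨hp⟩
  have hq0 : 0 < q := hq.pos
  have hq2' : 2 ≤ q := hq.two_le
  have h2n : 2 ^ (n + 1) = 2 * 2 ^ n := by rw [pow_succ]; ring
  have hplt : p < 2 ^ (n + 1) := by omega
  have hqlt : q < 2 ^ (n + 1) := by omega
  -- the subgroup of q-th roots of unity
  set Hset : Finset (ZMod p) := Finset.univ.filter (fun a : ZMod p => a ^ q = 1) with hHset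
  -- card Hset = q
  obtain ⟨g, hg⟩ := IsCyclic.exists_generator (α := (ZMod p)ˣ)
  have hord : orderOf g = 2 * q := by
    rw [orderOf_eq_card_of_forall_mem_zpowers hg, Nat.card_eq_fintype_card,
      ZMod.card_units p, hpq]
    omega
  have hordζ : orderOf (g ^ 2) = q := by
    rw [orderOf_pow, hord]
    have hgcd : Nat.gcd (2 * q) 2 = 2 := by
      simp [Nat.gcd_mul_left 2 q 1]
    rw [hgcd]
    omega
  have hpr : IsPrimitiveRoot ((g ^ 2 : (ZMod p)ˣ) : ZMod p) q := by
    have h1 : orderOf ((g ^ 2 : (ZMod p)ˣ) : ZMod p) = q := by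
      rw [orderOf_units, hordζ]
    exact h1 ▸ IsPrimitiveRoot.orderOf _
  have hHcard : Hset.card = q := by
    have h1 : Hset = Polynomial.nthRootsFinset q (1 : ZMod p) := by
      ext x
      simp [hHset, Polynomial.mem_nthRootsFinset hq0]
    rw [h1, hpr.card_nthRootsFinset]
  -- card of valid set = q
  have hVH : (Finset.univ.filter (Valid p q n)).card = Hset.card := by
    refine Finset.card_bij (fun v _ => ((v : ℕ) : ZMod p)) ?_ ?_ ?_
    · intro v hv
      simp only [hHset, Finset.mem_filter, Finset.mem_univ, true_and]
      exact (Finset.mem_filter.mp hv).2.2.2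
    · intro v hv w hw h
      have hv' := (Finset.mem_filter.mp hv).2
      have hw' := (Finset.mem_filter.mp hw).2
      rw [← Frep_cast hplt hv', ← Frep_cast hplt hw', h]
    · intro a ha
      have ha' : a ^ q = 1 := (Finset.mem_filter.mp ha).2
      exact ⟨Frep p hplt a,
        Finset.mem_filter.mpr ⟨Finset.mem_univ _, valid_Frep hq0 hplt ha'⟩,
        cast_Frep p hplt a⟩
  have hVcard : (Finset.univ.filter (Valid p q n)).card = q := by
    rw [hVH, hHcard]
  -- all-invalid tuples count
  have hI : (Finset.univ.filter (fun v : Fin (2 ^ (n + 1)) => ¬ Valid p q n v)).card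
      = 2 ^ (n + 1) - q := by
    have h1 := Finset.card_filter_add_card_filter_not
      (s := (Finset.univ : Finset (Fin (2 ^ (n + 1))))) (p := Valid p q n)
    have h2 : (Finset.univ : Finset (Fin (2 ^ (n + 1)))).card = 2 ^ (n + 1) := by
      simp
    omega
  have hAll : (Finset.univ.filter (fun v : Fin m → Fin (2 ^ (n + 1)) =>
      ∀ j, ¬ Valid p q n (v j))).card = (2 ^ (n + 1) - q) ^ m := by
    rw [card_forall_filter m (fun v => ¬ Valid p q n v), hI]
  -- the sets S a
  set SF : ZMod p → Finset (Fin m → Fin (2 ^ (n + 1))) := fun a =>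
    Finset.univ.filter (fun v => phi p q n m v = a ∧
      (Finset.univ.filter (fun j : Fin m => Valid p q n (v j))).Nonempty) with hSF
  have hkey : ∀ a b : ZMod p, a ^ q = 1 → b ^ q = 1 → (SF a).card = (SF b).card := by
    intro a b ha hb
    apply Finset.card_bij'
      (i := fun v _ => fun j => Equiv.swap (Frep p hplt a) (Frep p hplt b) (v j))
      (j := fun v _ => fun j => Equiv.swap (Frep p hplt a) (Frep p hplt b) (v j))
    · intro v hv
      obtain ⟨-, hphi, hne⟩ := Finset.mem_filter.mp hv
      refine Finset.mem_filter.mpr ⟨Finset.mem_univ _, ?_, ?_⟩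
      · exact phi_swap hq0 hplt ha hb v hne hphi
      · rw [filter_swap_eq hq0 hplt ha hb v]
        exact hne
    · intro v hv
      obtain ⟨-, hphi, hne⟩ := Finset.mem_filter.mp hv
      refine Finset.mem_filter.mpr ⟨Finset.mem_univ _, ?_, ?_⟩
      · rw [show Equiv.swap (Frep p hplt a) (Frep p hplt b)
            = Equiv.swap (Frep p hplt b) (Frep p hplt a) from Equiv.swap_comm _ _]
        exact phi_swap hq0 hplt hb ha v hne hphi
      · rw [filter_swap_eq hq0 hplt ha hb v]
        exact hne
    · intro v _
      funext j
      exact Equiv.swap_apply_self _ _ _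
    · intro v _
      funext j
      exact Equiv.swap_apply_self _ _ _
  -- fibers over non-identity elements equal SF
  have hfib : ∀ a : ZMod p, a ≠ 1 →
      Finset.univ.filter (fun v : Fin m → Fin (2 ^ (n + 1)) => phi p q n m v = a) = SF a := by
    intro a ha1
    ext v
    simp only [hSF, Finset.mem_filter, Finset.mem_univ, true_and]
    constructor
    · intro h
      refine ⟨h, ?_⟩
      by_contra hne
      have h1 : phi p q n m v = 1 := by
        unfold phi
        rw [dif_neg hne]
      exact ha1 (h ▸ h1 ▸ rfl)
    · exact And.left
  -- fiber over 1
  have hfib1 : (Finset.univ.filter (fun v : Fin m → Fin (2 ^ (n + 1)) =>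
      phi p q n m v = 1)).card = (SF 1).card + (2 ^ (n + 1) - q) ^ m := by
    have hsplit := Finset.card_filter_add_card_filter_not
      (s := Finset.univ.filter (fun v : Fin m → Fin (2 ^ (n + 1)) => phi p q n m v = 1))
      (p := fun v => (Finset.univ.filter (fun j : Fin m => Valid p q n (v j))).Nonempty)
    rw [Finset.filter_filter, Finset.filter_filter] at hsplit
    have h2 : Finset.univ.filter (fun v : Fin m → Fin (2 ^ (n + 1)) =>
        phi p q n m v = 1 ∧
          ¬ (Finset.univ.filter (fun j : Fin m => Valid p q n (v j))).Nonempty)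
        = Finset.univ.filter (fun v : Fin m → Fin (2 ^ (n + 1)) =>
            ∀ j, ¬ Valid p q n (v j)) := by
      ext v
      simp only [Finset.mem_filter, Finset.mem_univ, true_and]
      have hiff : ¬ (Finset.univ.filter (fun j : Fin m => Valid p q n (v j))).Nonempty
          ↔ ∀ j, ¬ Valid p q n (v j) := by
        simp [Finset.filter_nonempty_iff]
      constructor
      · rintro ⟨-, h⟩
        exact hiff.mp h
      · intro h
        have hne := hiff.mpr h
        refine ⟨?_, hne⟩
        unfold phi
        rw [dif_neg hne]
    rw [h2, hAll] at hsplit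
    rw [← hsplit]
  -- sum over fibers
  have hmem1 : (1 : ZMod p) ∈ Hset :=
    Finset.mem_filter.mpr ⟨Finset.mem_univ _, one_pow q⟩
  have hsum : 2 ^ ((n + 1) * m) = ∑ b ∈ Hset,
      (Finset.univ.filter (fun v : Fin m → Fin (2 ^ (n + 1)) => phi p q n m v = b)).card := by
    have h1 := Finset.card_eq_sum_card_fiberwise
      (f := phi p q n m) (s := Finset.univ) (t := Hset)
      (fun v _ => Finset.mem_filter.mpr ⟨Finset.mem_univ _, phi_pow v⟩)
    rw [← h1]
    rw [Finset.card_univ, Fintype.card_fun, Fintype.card_fin, Fintype.card_fin, ← pow_mul]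
  -- main counting identity
  have hmain : ∀ a : ZMod p, a ^ q = 1 → a ≠ 1 →
      q * (Finset.univ.filter (fun v : Fin m → Fin (2 ^ (n + 1)) =>
        phi p q n m v = a)).card = 2 ^ ((n + 1) * m) - (2 ^ (n + 1) - q) ^ m := by
    intro a ha ha1
    have hsum2 : 2 ^ ((n + 1) * m)
        = (Finset.univ.filter (fun v : Fin m → Fin (2 ^ (n + 1)) =>
            phi p q n m v = 1)).card
          + ∑ b ∈ Hset.erase 1,
            (Finset.univ.filter (fun v : Fin m → Fin (2 ^ (n + 1)) =>
              phi p q n m v = b)).card := by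
      rw [hsum, ← Finset.insert_erase hmem1,
        Finset.sum_insert (Finset.notMem_erase (1 : ZMod p) Hset),
        Finset.erase_insert (Finset.notMem_erase (1 : ZMod p) Hset)]
    have herase : ∀ b ∈ Hset.erase 1,
        (Finset.univ.filter (fun v : Fin m → Fin (2 ^ (n + 1)) =>
          phi p q n m v = b)).card = (SF a).card := by
      intro b hb
      have hb1 : b ≠ 1 := Finset.ne_of_mem_erase hb
      have hbq : b ^ q = 1 := (Finset.mem_filter.mp (Finset.mem_of_mem_erase hb)).2
      rw [hfib b hb1]
      exact hkey b a hbq ha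
    have hsc : ∑ b ∈ Hset.erase 1,
        (Finset.univ.filter (fun v : Fin m → Fin (2 ^ (n + 1)) =>
          phi p q n m v = b)).card = (Hset.erase 1).card * (SF a).card := by
      rw [← smul_eq_mul, ← Finset.sum_const]
      exact Finset.sum_congr rfl herase
    have hec : (Hset.erase 1).card = q - 1 := by
      rw [Finset.card_erase_of_mem hmem1, hHcard]
    rw [hsc, hec] at hsum2
    rw [hfib1, hkey 1 a (one_pow q) ha] at hsum2
    rw [hfib a ha1]
    have hmul : q * (SF a).card = (q - 1) * (SF a).card + (SF a).card := by
      conv_lhs => rw [← Nat.succ_pred_eq_of_pos hq0]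
      rw [Nat.succ_mul, Nat.pred_eq_sub_one]
    obtain ⟨c, hc⟩ : ∃ c, (SF a).card = c := ⟨_, rfl⟩
    rw [hc] at hsum2 hmul ⊢
    have hTI : 2 ^ ((n + 1) * m) - (2 ^ (n + 1) - q) ^ m = (q - 1) * c + c := by
      apply Nat.sub_eq_of_eq_add
      rw [hsum2]
      ring
    rw [hmul]
    exact hTI.symm
  refine ⟨hmain, ?_⟩
  intro a a' ha ha1 ha' ha1'
  rw [hfib a ha1, hfib a' ha1']
  exact hkey a a' ha ha'
end

section
/- Fix n ≥ 1, m ≥ 1 and primes p, q with p = 2·q + 1 and 2^(n−1) ≤ q < 2^n, and let φ : (Fin m → Fin (2^(n+1))) → ZMod p be the rejection-sampling map. Then the fiber of φ over the identity satisfies q · card(φ⁻¹(1)) = 2^((n+1)·m) + (q − 1)·(2^(n+1) − q)^m. -/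
open Finset

/-! ### Auxiliary lemmas -/

lemma card_pow_prime_eq (G : Type*) [Group G] [Fintype G] [DecidableEq G] [IsCyclic G]
    (q : ℕ) [hqf : Fact q.Prime] (hdvd : q ∣ Fintype.card G) :
    (univ.filter fun b : G => b ^ q = 1).card = q := by
  obtain ⟨x, hx⟩ := exists_prime_orderOf_dvd_card q hdvd
  refine le_antisymm (IsCyclic.card_pow_eq_one_le hqf.out.pos) ?_
  have hsub : (range q).image (x ^ ·) ⊆ univ.filter fun b : G => b ^ q = 1 := by
    intro b hb
    obtain ⟨k, _, rfl⟩ := Finset.mem_image.mp hb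
    simp only [mem_filter, mem_univ, true_and]
    rw [← pow_mul, mul_comm, pow_mul, ← hx, pow_orderOf_eq_one, one_pow]
  calc q = ((range q).image (x ^ ·)).card := by
        rw [Finset.card_image_of_injOn, card_range]
        intro a ha b hb hab
        simp only [coe_range, Set.mem_Iio] at ha hb
        exact pow_injOn_Iio_orderOf (by simpa [hx] using ha) (by simpa [hx] using hb) hab
    _ ≤ _ := Finset.card_le_card hsub

lemma card_zmod_roots (p q : ℕ) [hpf : Fact p.Prime] (hq : q.Prime) (hpq : p = 2 * q + 1) :
    (univ.filter fun x : ZMod p => x ^ q = 1).card = q := by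
  haveI : Fact q.Prime := ⟨hq⟩
  have hdvd : q ∣ Fintype.card (ZMod p)ˣ := by
    rw [ZMod.card_units_eq_totient, Nat.totient_prime hpf.out, hpq]
    exact ⟨2, by omega⟩
  have h := Finset.card_nbij (s := univ.filter fun u : (ZMod p)ˣ => u ^ q = 1)
      (t := univ.filter fun x : ZMod p => x ^ q = 1) (fun u => (u : ZMod p)) ?_ ?_ ?_
  · rw [← h]; exact card_pow_prime_eq (ZMod p)ˣ q hdvd
  · intro u hu
    simp only [mem_coe, mem_filter, mem_univ, true_and] at hu ⊢
    rw [← Units.val_pow_eq_pow_val, hu, Units.val_one]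
  · intro a _ b _ hab
    exact Units.ext hab
  · intro x hx
    simp only [mem_coe, mem_filter, mem_univ, true_and] at hx
    have hx0 : x ≠ 0 := fun h => by simp [h, zero_pow hq.ne_zero] at hx
    refine ⟨Units.mk0 x hx0, ?_, rfl⟩
    simp only [mem_coe, mem_filter, mem_univ, true_and]
    ext; rw [Units.val_pow_eq_pow_val]; exact hx

lemma card_valid (n p q : ℕ) (hp : p.Prime) (hq : q.Prime)
    (hpq : p = 2 * q + 1) (hq2 : q < 2 ^ n) :
    (univ.filter (Valid p q n)).card = q := by
  haveI : Fact p.Prime := ⟨hp⟩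
  have hplt : p < 2 ^ (n + 1) := by
    have h1 : q + 1 ≤ 2 ^ n := hq2
    have h2 : (2:ℕ) ^ (n+1) = 2 * 2 ^ n := by ring
    omega
  have hp1 : 2 ≤ p := hp.two_le
  refine (Finset.card_nbij (s := univ.filter (Valid p q n))
    (t := univ.filter fun x : ZMod p => x ^ q = 1)
    (fun v => ((v : ℕ) : ZMod p)) ?_ ?_ ?_).trans (card_zmod_roots p q hq hpq)
  · intro v hv
    simp only [mem_coe, mem_filter, mem_univ, true_and] at hv ⊢
    exact hv.2.2
  · intro a ha b hb hab
    simp only [mem_coe, mem_filter, mem_univ, true_and] at ha hb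
    obtain ⟨-, ha2, -⟩ := ha
    obtain ⟨-, hb2, -⟩ := hb
    have ha' : (a : ℕ) < p := by omega
    have hb' : (b : ℕ) < p := by omega
    have := congrArg ZMod.val hab
    rw [ZMod.val_cast_of_lt ha', ZMod.val_cast_of_lt hb'] at this
    exact Fin.ext this
  · intro x hx
    simp only [mem_coe, mem_filter, mem_univ, true_and] at hx
    have hx0 : x ≠ 0 := fun h => by
      rw [h, zero_pow hq.ne_zero] at hx
      exact zero_ne_one hx
    have hv1 : x.val ≠ 0 := fun h => hx0 (by rwa [← ZMod.val_eq_zero])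
    have hv2 : x.val < p := ZMod.val_lt x
    refine ⟨⟨x.val, by omega⟩, ?_, ?_⟩
    · simp only [mem_coe, mem_filter, mem_univ, true_and]
      refine ⟨by simp; omega, by simp; omega, ?_⟩
      simpa [ZMod.natCast_val, ZMod.cast_id] using hx
    · simp [ZMod.natCast_val, ZMod.cast_id]

/-- classifying map: index of the first valid attempt -/
def firstValid (p q n m : ℕ) (v : Fin m → Fin (2 ^ (n + 1))) : Option (Fin m) :=
  if h : (Finset.univ.filter (fun j : Fin m => Valid p q n (v j))).Nonempty then
    some ((Finset.univ.filter (fun j : Fin m => Valid p q n (v j))).min' h)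
  else none

lemma firstValid_eq_none_iff {p q n m : ℕ} {v : Fin m → Fin (2 ^ (n + 1))} :
    firstValid p q n m v = none ↔ ∀ i, ¬ Valid p q n (v i) := by
  unfold firstValid
  split
  · rename_i h
    simp only [reduceCtorEq, false_iff, not_forall, not_not]
    obtain ⟨i, hi⟩ := h
    exact ⟨i, (mem_filter.mp hi).2⟩
  · rename_i h
    simp only [true_iff]
    intro i hi
    exact h ⟨i, mem_filter.mpr ⟨mem_univ i, hi⟩⟩

lemma firstValid_eq_some_iff {p q n m : ℕ} {v : Fin m → Fin (2 ^ (n + 1))} {j : Fin m} :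
    firstValid p q n m v = some j ↔
      Valid p q n (v j) ∧ ∀ i, i < j → ¬ Valid p q n (v i) := by
  unfold firstValid
  split
  · rename_i h
    simp only [Option.some.injEq]
    constructor
    · rintro rfl
      refine ⟨(mem_filter.mp (Finset.min'_mem _ h)).2, fun i hij hvi => ?_⟩
      exact absurd (Finset.min'_le _ i (mem_filter.mpr ⟨mem_univ i, hvi⟩)) (not_le.mpr hij)
    · rintro ⟨hj, hmin⟩
      have h1 : j ∈ Finset.univ.filter (fun j : Fin m => Valid p q n (v j)) :=
        mem_filter.mpr ⟨mem_univ j, hj⟩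
      refine le_antisymm (Finset.min'_le _ j h1) ?_
      by_contra hlt
      exact hmin _ (not_le.mp hlt) (mem_filter.mp (Finset.min'_mem _ h)).2
  · rename_i h
    simp only [reduceCtorEq, false_iff, not_and]
    intro hj
    exact absurd ⟨j, mem_filter.mpr ⟨mem_univ j, hj⟩⟩ h

lemma phi_of_firstValid_none {p q n m : ℕ} {v : Fin m → Fin (2 ^ (n + 1))}
    (h : firstValid p q n m v = none) : phi p q n m v = 1 := by
  unfold phi
  rw [dif_neg]
  intro hne
  rw [firstValid, dif_pos hne] at h
  exact nomatch h

lemma phi_of_firstValid_some {p q n m : ℕ} {v : Fin m → Fin (2 ^ (n + 1))} {j : Fin m}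
    (h : firstValid p q n m v = some j) : phi p q n m v = ((v j : ℕ) : ZMod p) := by
  unfold phi
  by_cases hne : (Finset.univ.filter (fun j : Fin m => Valid p q n (v j))).Nonempty
  · rw [dif_pos hne]
    rw [firstValid, dif_pos hne, Option.some.injEq] at h
    rw [h]
  · rw [firstValid, dif_neg hne] at h
    exact nomatch h

lemma geom_aux (a q : ℕ) :
    ∀ m, q * (∑ j ∈ Finset.range m, a ^ j * (q + a) ^ (m - 1 - j)) + a ^ m = (q + a) ^ m
  | 0 => by simp
  | (m + 1) => by
    have IH := geom_aux a q m
    rw [Finset.sum_range_succ]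
    have hstep : ∀ j ∈ Finset.range m,
        a ^ j * (q + a) ^ (m + 1 - 1 - j) = (q + a) * (a ^ j * (q + a) ^ (m - 1 - j)) := by
      intro j hj
      rw [Finset.mem_range] at hj
      have h : m + 1 - 1 - j = (m - 1 - j) + 1 := by omega
      rw [h, pow_succ]; ring
    rw [Finset.sum_congr rfl hstep, ← Finset.mul_sum]
    have h0 : m + 1 - 1 - m = 0 := by omega
    rw [h0, pow_zero, mul_one]
    conv_rhs => rw [pow_succ, ← IH]
    ring

lemma prod_ite_card (m : ℕ) (j : Fin m) (a c : ℕ) :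
    (∏ i : Fin m, (if i < j then a else if i = j then 1 else c))
      = a ^ (j : ℕ) * c ^ (m - 1 - (j : ℕ)) := by
  rw [Finset.prod_ite, Finset.prod_const, Finset.prod_ite, Finset.prod_const, Finset.prod_const,
    one_pow, one_mul]
  congr 1
  · congr 1
    have : (univ.filter fun i : Fin m => i < j) = Finset.Iio j := by ext i; simp
    rw [this, Fin.card_Iio]
  · congr 1
    rw [Finset.filter_filter]
    have : (univ.filter fun i : Fin m => ¬ i < j ∧ ¬ i = j) = Finset.Ioi j := by
      ext i
      simp only [mem_filter, mem_univ, true_and, Finset.mem_Ioi]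
      constructor
      · rintro ⟨h1, h2⟩; exact lt_of_le_of_ne (not_lt.mp h1) (Ne.symm h2)
      · intro h; exact ⟨not_lt.mpr h.le, ne_of_gt h⟩
    rw [this, Fin.card_Ioi]

/-- The fiber of the rejection-sampling map over the identity satisfies
`q * card(φ⁻¹(1)) = 2^((n+1)m) + (q - 1) * (2^(n+1) - q)^m`. -/
theorem stmt6 (n m p q : ℕ) (hn : 1 ≤ n) (hm : 1 ≤ m) (hp : p.Prime) (hq : q.Prime)
    (hpq : p = 2 * q + 1) (hq1 : 2 ^ (n - 1) ≤ q) (hq2 : q < 2 ^ n) :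
    q * (Finset.univ.filter (fun v : Fin m → Fin (2 ^ (n + 1)) =>
          phi p q n m v = 1)).card
      = 2 ^ ((n + 1) * m) + (q - 1) * (2 ^ (n + 1) - q) ^ m := by
  classical
  haveI : Fact p.Prime := ⟨hp⟩
  have hp2 : 2 ≤ p := hp.two_le
  haveI : Fact (1 < p) := ⟨by omega⟩
  have hq0 : 0 < q := hq.pos
  have hNq : 2 * q < 2 ^ (n + 1) := by
    have h1 : q + 1 ≤ 2 ^ n := hq2
    have h2 : (2:ℕ) ^ (n+1) = 2 * 2 ^ n := by ring
    omega
  have h1N : 1 < 2 ^ (n + 1) := by omega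
  set one : Fin (2 ^ (n + 1)) := ⟨1, h1N⟩ with hone
  have hone_valid : Valid p q n one := by
    refine ⟨le_refl 1, ?_, ?_⟩
    · show (1:ℕ) ≤ p - 1; omega
    · simp [one]
  have huniq : ∀ w : Fin (2 ^ (n + 1)), Valid p q n w → ((w : ℕ) : ZMod p) = 1 → w = one := by
    intro w hw hcast
    obtain ⟨hw1, hw2, -⟩ := hw
    have hwp : (w : ℕ) < p := by omega
    have hval := congrArg ZMod.val hcast
    rw [ZMod.val_cast_of_lt hwp, ZMod.val_one] at hval
    exact Fin.ext (by simp [one, hval])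
  have hval : (univ.filter (Valid p q n)).card = q := card_valid n p q hp hq hpq hq2
  have hinv : (univ.filter fun x => ¬ Valid p q n x).card = 2 ^ (n + 1) - q := by
    have h := Finset.card_filter_add_card_filter_not
      (s := (univ : Finset (Fin (2 ^ (n + 1))))) (p := Valid p q n)
    rw [card_univ, Fintype.card_fin] at h
    omega
  set F := univ.filter (fun v : Fin m → Fin (2 ^ (n + 1)) => phi p q n m v = 1) with hF
  have hsplit : F.card = ∑ o : Option (Fin m),
      (F.filter fun v => firstValid p q n m v = o).card :=
    Finset.card_eq_sum_card_fiberwise (fun v _ => mem_univ _)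
  have hnone : F.filter (fun v => firstValid p q n m v = none)
      = Fintype.piFinset (fun _ : Fin m => univ.filter fun x => ¬ Valid p q n x) := by
    ext v
    simp only [hF, mem_filter, mem_univ, true_and, Fintype.mem_piFinset]
    constructor
    · rintro ⟨-, hg⟩ i
      exact (firstValid_eq_none_iff.mp hg) i
    · intro h
      have hg : firstValid p q n m v = none := firstValid_eq_none_iff.mpr h
      exact ⟨phi_of_firstValid_none hg, hg⟩
  have hsome : ∀ j : Fin m, F.filter (fun v => firstValid p q n m v = some j)
      = Fintype.piFinset (fun i : Fin m =>
          if i < j then univ.filter (fun x => ¬ Valid p q n x)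
          else if i = j then {one} else univ) := by
    intro j
    ext v
    simp only [hF, mem_filter, mem_univ, true_and, Fintype.mem_piFinset]
    constructor
    · rintro ⟨hphi, hg⟩ i
      obtain ⟨hvj, hlt⟩ := firstValid_eq_some_iff.mp hg
      have hvj1 : v j = one := huniq _ hvj (by rw [← phi_of_firstValid_some hg]; exact hphi)
      by_cases h1 : i < j
      · simp [h1, hlt i h1]
      · by_cases h2 : i = j
        · simp [h1, h2, hvj1]
        · simp [h1, h2]
    · intro h
      have hvj : v j = one := by
        have := h j
        simpa [lt_irrefl] using this
      have hlt : ∀ i, i < j → ¬ Valid p q n (v i) := by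
        intro i hi
        have := h i
        simp only [if_pos hi, mem_filter, mem_univ, true_and] at this
        exact this
      have hg : firstValid p q n m v = some j :=
        firstValid_eq_some_iff.mpr ⟨by rw [hvj]; exact hone_valid, hlt⟩
      refine ⟨?_, hg⟩
      rw [phi_of_firstValid_some hg, hvj]
      simp [one]
  have hnonec : (F.filter (fun v => firstValid p q n m v = none)).card
      = (2 ^ (n + 1) - q) ^ m := by
    rw [hnone, Fintype.card_piFinset]
    simp [hinv]
  have hsomec : ∀ j : Fin m, (F.filter (fun v => firstValid p q n m v = some j)).card
      = (2 ^ (n + 1) - q) ^ (j : ℕ) * (2 ^ (n + 1)) ^ (m - 1 - (j : ℕ)) := by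
    intro j
    rw [hsome j, Fintype.card_piFinset]
    have hcards : ∀ i : Fin m,
        (if i < j then univ.filter (fun x => ¬ Valid p q n x)
          else if i = j then ({one} : Finset (Fin (2 ^ (n + 1)))) else univ).card
        = (if i < j then 2 ^ (n + 1) - q else if i = j then 1 else 2 ^ (n + 1)) := by
      intro i
      split_ifs <;> simp [hinv]
    rw [Finset.prod_congr rfl (fun i _ => hcards i)]
    exact prod_ite_card m j _ _
  rw [hsplit, Fintype.sum_option, hnonec]
  simp only [hsomec]
  rw [Fin.sum_univ_eq_sum_range
    (fun j => (2 ^ (n + 1) - q) ^ j * (2 ^ (n + 1)) ^ (m - 1 - j)) m]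
  have hqa : q + (2 ^ (n + 1) - q) = 2 ^ (n + 1) := by omega
  have G := geom_aux (2 ^ (n + 1) - q) q m
  rw [hqa] at G
  have hA : (q - 1) * (2 ^ (n + 1) - q) ^ m + (2 ^ (n + 1) - q) ^ m
      = q * (2 ^ (n + 1) - q) ^ m := by
    have h1 : q - 1 + 1 = q := by omega
    calc (q - 1) * (2 ^ (n + 1) - q) ^ m + (2 ^ (n + 1) - q) ^ m
        = ((q - 1) + 1) * (2 ^ (n + 1) - q) ^ m := by ring
      _ = q * (2 ^ (n + 1) - q) ^ m := by rw [h1]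
  rw [pow_mul]
  calc q * ((2 ^ (n + 1) - q) ^ m
        + ∑ j ∈ Finset.range m, (2 ^ (n + 1) - q) ^ j * (2 ^ (n + 1)) ^ (m - 1 - j))
      = (q - 1) * (2 ^ (n + 1) - q) ^ m
        + (q * (∑ j ∈ Finset.range m, (2 ^ (n + 1) - q) ^ j * (2 ^ (n + 1)) ^ (m - 1 - j))
          + (2 ^ (n + 1) - q) ^ m) := by rw [mul_add, ← hA]; ring
    _ = (2 ^ (n + 1)) ^ m + (q - 1) * (2 ^ (n + 1) - q) ^ m := by rw [G, add_comm]
end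

section
/- Fix n ≥ 6, m ≥ 1 and primes p, q with p = 2·q + 1 and 2^(n−1) ≤ q < 2^n, and let φ : (Fin m → Fin (2^(n+1))) → ZMod p be the rejection-sampling map. If (m : ℝ) ≥ Real.log (2·n·Real.log n) / Real.log (4/3), then card(φ⁻¹(1)) · (n · Real.log n) ≤ 2^((n+1)·m); equivalently, the probability that a uniformly random input is mapped to the identity is at most 1/(n·log n). -/
open Finset

/-- There are at least `q` valid values: the `q`-th roots of unity mod `p`, represented
by their least positive residues. -/
lemma valid_count (n p q : ℕ) (hp : p.Prime) (hpq : p = 2 * q + 1)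
    (hq2 : q < 2 ^ n) :
    q ≤ (Finset.univ.filter (Valid p q n)).card := by
  haveI : Fact p.Prime := ⟨hp⟩
  have hp1 : 1 < p := hp.one_lt
  have hplt : p < 2 ^ (n + 1) := by
    have : 2 * q + 1 < 2 * 2 ^ n := by omega
    simpa [hpq, pow_succ, mul_comm] using this
  obtain ⟨g, hg⟩ := IsCyclic.exists_generator (α := (ZMod p)ˣ)
  have hord : orderOf g = 2 * q := by
    rw [orderOf_eq_card_of_forall_mem_zpowers hg, Nat.card_eq_fintype_card,
      ZMod.card_units_eq_totient, Nat.totient_prime hp]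
    omega
  set f : ℕ → Fin (2 ^ (n + 1)) := fun k =>
    ⟨(((g ^ (2 * k) : (ZMod p)ˣ) : ZMod p)).val, lt_trans (ZMod.val_lt _) hplt⟩ with hf
  have hval : ∀ k, (f k : ℕ) = (((g ^ (2 * k) : (ZMod p)ˣ) : ZMod p)).val := fun k => rfl
  have key : ∀ k, Valid p q n (f k) := by
    intro k
    set x : ZMod p := ((g ^ (2 * k) : (ZMod p)ˣ) : ZMod p) with hx
    have hx0 : x ≠ 0 := Units.ne_zero _
    refine ⟨?_, ?_, ?_⟩
    · have : x.val ≠ 0 := by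
        simpa [ZMod.val_eq_zero] using hx0
      rw [hval, ← hx]; omega
    · have := ZMod.val_lt x; rw [hval, ← hx]; omega
    · have hcast : ((f k : ℕ) : ZMod p) = x := by
        rw [hval]; exact ZMod.natCast_rightInverse x
      rw [hcast, hx]
      have : (g ^ (2 * k)) ^ q = 1 := by
        rw [← pow_mul, show 2 * k * q = 2 * q * k by ring, pow_mul, ← hord,
          pow_orderOf_eq_one, one_pow]
      calc ((g ^ (2 * k) : (ZMod p)ˣ) : ZMod p) ^ q
          = (((g ^ (2 * k)) ^ q : (ZMod p)ˣ) : ZMod p) := by push_cast; ring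
        _ = 1 := by rw [this]; rfl
  have hinj : Set.InjOn f (Finset.range q) := by
    intro k1 h1 k2 h2 hfe
    simp only [Finset.coe_range, Set.mem_Iio] at h1 h2
    have : (f k1 : ℕ) = (f k2 : ℕ) := congrArg Fin.val hfe
    rw [hval, hval] at this
    have hxe : ((g ^ (2 * k1) : (ZMod p)ˣ) : ZMod p) = ((g ^ (2 * k2) : (ZMod p)ˣ) : ZMod p) := by
      have := congrArg (fun t : ℕ => (t : ZMod p)) this
      simpa [ZMod.natCast_rightInverse _] using this
    have hue : g ^ (2 * k1) = g ^ (2 * k2) := Units.ext hxe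
    have := pow_injOn_Iio_orderOf (x := g) (by rw [hord]; exact Set.mem_Iio.2 (by omega))
      (by rw [hord]; exact Set.mem_Iio.2 (by omega)) hue
    omega
  calc q = (Finset.range q).card := (Finset.card_range q).symm
    _ ≤ _ := Finset.card_le_card_of_injOn f
        (fun k hk => Finset.mem_filter.2 ⟨Finset.mem_univ _, key k⟩) hinj

/-- Union bound over the first valid index: counting the inputs mapped to `1`. -/
lemma count_bound (n m p q : ℕ) (hp : p.Prime)
    (hvc : q ≤ (Finset.univ.filter (Valid p q n)).card) :
    ((Finset.univ.filter (fun v : Fin m → Fin (2 ^ (n + 1)) => phi p q n m v = 1)).card : ℕ)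
      ≤ (2 ^ (n + 1) - q) ^ m
        + ∑ j ∈ range m, (2 ^ (n + 1) - q) ^ j * (2 ^ (n + 1)) ^ (m - 1 - j) := by
  classical
  have hp1 : 1 < p := hp.one_lt
  have hNpos : 1 < 2 ^ (n + 1) := Nat.one_lt_two_pow_iff.2 (Nat.succ_ne_zero n)
  set N := 2 ^ (n + 1) with hN
  set one : Fin (2 ^ (n + 1)) := ⟨1, hNpos⟩ with hone
  set B : Finset (Fin (2 ^ (n + 1))) := univ.filter (fun v => ¬ Valid p q n v) with hB
  have hBcard : B.card ≤ N - q := by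
    have hsum := Finset.card_filter_add_card_filter_not
      (s := (univ : Finset (Fin (2 ^ (n + 1))))) (p := Valid p q n)
    rw [← hB] at hsum
    simp only [Finset.card_univ, Fintype.card_fin] at hsum
    show B.card ≤ 2 ^ (n + 1) - q
    have h2 : 2 ^ n ≤ 2 ^ (n + 1) := Nat.pow_le_pow_right (by norm_num) (by omega)
    omega
  set T0 : Finset (Fin m → Fin (2 ^ (n + 1))) := Fintype.piFinset (fun _ => B) with hT0
  set T : Fin m → Finset (Fin m → Fin (2 ^ (n + 1))) := fun j =>
    Fintype.piFinset (fun i => if i < j then B else if i = j then {one} else univ) with hT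
  -- subset
  have hsub : (univ.filter (fun v : Fin m → Fin (2 ^ (n + 1)) => phi p q n m v = 1))
      ⊆ T0 ∪ univ.biUnion T := by
    intro v hv
    have hphi : phi p q n m v = 1 := (mem_filter.1 hv).2
    unfold phi at hphi
    by_cases h : (Finset.univ.filter (fun j : Fin m => Valid p q n (v j))).Nonempty
    · rw [dif_pos h] at hphi
      set j := (Finset.univ.filter (fun j : Fin m => Valid p q n (v j))).min' h with hj
      have hjvalid : Valid p q n (v j) :=
        (mem_filter.1 ((Finset.univ.filter (fun j : Fin m => Valid p q n (v j))).min'_mem h)).2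
      have hvj : v j = one := by
        obtain ⟨h1, h2, _⟩ := hjvalid
        have hlt : (v j : ℕ) < p := by omega
        have hc : ((v j : ℕ) : ZMod p) = ((1 : ℕ) : ZMod p) := by rw [hphi, Nat.cast_one]
        have hmod : (v j : ℕ) % p = 1 % p := (ZMod.natCast_eq_natCast_iff _ _ _).1 hc
        rw [Nat.mod_eq_of_lt hlt, Nat.mod_eq_of_lt hp1] at hmod
        exact Fin.ext hmod
      refine mem_union_right _ (mem_biUnion.2 ⟨j, mem_univ _, ?_⟩)
      rw [hT]
      refine Fintype.mem_piFinset.2 (fun i => ?_)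
      by_cases hij : i < j
      · rw [if_pos hij, hB, mem_filter]
        refine ⟨mem_univ _, fun hvalid => ?_⟩
        have : j ≤ i := by
          rw [hj]
          exact Finset.min'_le (univ.filter (fun k : Fin m => Valid p q n (v k))) i
            (mem_filter.2 ⟨mem_univ _, hvalid⟩)
        exact absurd hij (not_lt.2 this)
      · rw [if_neg hij]
        by_cases hij2 : i = j
        · rw [if_pos hij2, hij2, hvj]; exact mem_singleton_self _
        · rw [if_neg hij2]; exact mem_univ _
    · refine mem_union_left _ ?_
      rw [hT0]
      refine Fintype.mem_piFinset.2 (fun i => ?_)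
      rw [hB, mem_filter]
      refine ⟨mem_univ _, fun hvalid => h ⟨i, mem_filter.2 ⟨mem_univ _, hvalid⟩⟩⟩
  -- cards
  have hT0card : T0.card ≤ (N - q) ^ m := by
    rw [hT0, Fintype.card_piFinset]
    calc ∏ _i : Fin m, B.card ≤ ∏ _i : Fin m, (N - q) :=
          Finset.prod_le_prod (fun _ _ => Nat.zero_le _) (fun _ _ => hBcard)
      _ = (N - q) ^ m := by rw [Finset.prod_const, Finset.card_univ, Fintype.card_fin]
  have hTcard : ∀ j : Fin m, (T j).card ≤ (N - q) ^ (j : ℕ) * N ^ (m - 1 - (j : ℕ)) := by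
    intro j
    rw [hT, Fintype.card_piFinset]
    have hcc : ∀ i : Fin m,
        (if i < j then B else if i = j then ({one} : Finset _) else univ).card
          = (fun i : ℕ => if i < (j : ℕ) then B.card else if i = (j : ℕ) then 1 else N)
            (i : ℕ) := by
      intro i
      by_cases h1 : i < j
      · simp [h1, Fin.lt_def.1 h1]
      · have h1' : ¬ ((i : ℕ) < (j : ℕ)) := fun hc => h1 (Fin.lt_def.2 hc)
        by_cases h2 : i = j
        · simp [h1, h1', h2]
        · have h2' : (i : ℕ) ≠ (j : ℕ) := fun hc => h2 (Fin.ext hc)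
          simp [h1, h1', h2, h2', hN, card_univ]
    rw [Finset.prod_congr rfl (fun i _ => hcc i),
      Fin.prod_univ_eq_prod_range
        (fun i : ℕ => if i < (j : ℕ) then B.card else if i = (j : ℕ) then 1 else N) m]
    have hjm : (j : ℕ) < m := j.isLt
    rw [range_eq_Ico, ← prod_Ico_consecutive _ (Nat.zero_le ((j:ℕ)+1)) hjm,
      ← prod_Ico_consecutive _ (Nat.zero_le (j:ℕ)) (Nat.le_succ _)]
    have e1 : ∏ i ∈ Ico 0 (j : ℕ),
        (if i < (j : ℕ) then B.card else if i = (j : ℕ) then 1 else N) = B.card ^ (j : ℕ) := by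
      rw [Finset.prod_congr rfl (fun i hi => by
        rw [if_pos (by simpa using (Finset.mem_Ico.1 hi).2)]), Finset.prod_const]
      simp
    have e2 : ∏ i ∈ Ico (j : ℕ) ((j : ℕ) + 1),
        (if i < (j : ℕ) then B.card else if i = (j : ℕ) then 1 else N) = 1 := by
      rw [Nat.Ico_succ_singleton, Finset.prod_singleton, if_neg (lt_irrefl _), if_pos rfl]
    have e3 : ∏ i ∈ Ico ((j : ℕ) + 1) m,
        (if i < (j : ℕ) then B.card else if i = (j : ℕ) then 1 else N)
          = N ^ (m - 1 - (j : ℕ)) := by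
      rw [Finset.prod_congr rfl (fun i hi => by
        have := Finset.mem_Ico.1 hi
        rw [if_neg (by omega), if_neg (by omega)]), Finset.prod_const, Nat.card_Ico]
      congr 1; omega
    rw [e1, e2, e3, mul_one]
    exact Nat.mul_le_mul_right _ (Nat.pow_le_pow_left hBcard _)
  calc (univ.filter (fun v : Fin m → Fin (2 ^ (n + 1)) => phi p q n m v = 1)).card
      ≤ (T0 ∪ univ.biUnion T).card := Finset.card_le_card hsub
    _ ≤ T0.card + (univ.biUnion T).card := Finset.card_union_le _ _
    _ ≤ T0.card + ∑ j : Fin m, (T j).card :=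
        Nat.add_le_add_left (Finset.card_biUnion_le) _
    _ ≤ (N - q) ^ m + ∑ j : Fin m, (N - q) ^ (j : ℕ) * N ^ (m - 1 - (j : ℕ)) :=
        Nat.add_le_add hT0card (Finset.sum_le_sum (fun j _ => hTcard j))
    _ = (N - q) ^ m + ∑ j ∈ range m, (N - q) ^ j * N ^ (m - 1 - j) := by
        rw [Fin.sum_univ_eq_sum_range (fun j => (N - q) ^ j * N ^ (m - 1 - j))]

lemma natsq (n : ℕ) (hn : 6 ≤ n) : 4 * n ^ 2 ≤ 5 * 2 ^ (n - 1) := by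
  induction n, hn using Nat.le_induction with
  | base => norm_num
  | succ k hk ih =>
    have h1 : k + 1 - 1 = (k - 1) + 1 := by omega
    have h2 : 4 * (k + 1) ^ 2 ≤ 2 * (4 * k ^ 2) := by nlinarith
    calc 4 * (k + 1) ^ 2 ≤ 2 * (4 * k ^ 2) := h2
      _ ≤ 2 * (5 * 2 ^ (k - 1)) := by omega
      _ = 5 * 2 ^ (k + 1 - 1) := by rw [h1, pow_succ]; ring

set_option maxHeartbeats 2000000 in
/-- With `m ≥ log(2 n log n) / log(4/3)` rejection-sampling attempts, the identity
is output with probability at most `1 / (n log n)`. -/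
theorem stmt7 (n m p q : ℕ) (hn : 6 ≤ n) (hm1 : 1 ≤ m) (hp : p.Prime) (hq : q.Prime)
    (hpq : p = 2 * q + 1) (hq1 : 2 ^ (n - 1) ≤ q) (hq2 : q < 2 ^ n)
    (hm : (m : ℝ) ≥ Real.log (2 * n * Real.log n) / Real.log (4 / 3)) :
    ((Finset.univ.filter (fun v : Fin m → Fin (2 ^ (n + 1)) =>
          phi p q n m v = 1)).card : ℝ) * (n * Real.log n)
      ≤ 2 ^ ((n + 1) * m) := by
  have hq0 : 0 < q := hq.pos
  have hcb := count_bound n m p q hp (valid_count n p q hp hpq hq2)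
  set C := (Finset.univ.filter (fun v : Fin m → Fin (2 ^ (n + 1)) =>
      phi p q n m v = 1)).card with hCdef
  -- real preliminaries
  have hn1 : (1:ℝ) < n := by exact_mod_cast (by omega : 1 < n)
  have hlogn : 0 < Real.log n := Real.log_pos hn1
  set L : ℝ := n * Real.log n with hL
  have hLpos : 0 < L := mul_pos (by linarith) hlogn
  have he : ((5:ℝ)/2) ≤ Real.exp 1 := le_of_lt (lt_trans (by norm_num) Real.exp_one_gt_d9)
  have hepos : (0:ℝ) < Real.exp 1 := Real.exp_pos 1
  have hlog_le : Real.log n ≤ (n:ℝ) / Real.exp 1 := by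
    have h := Real.log_le_sub_one_of_pos (show (0:ℝ) < (n:ℝ) / Real.exp 1 by positivity)
    rw [Real.log_div (by linarith) (Real.exp_ne_zero 1), Real.log_exp] at h
    linarith
  have hstep1 : L ≤ (n:ℝ) ^ 2 / Real.exp 1 := by
    calc L = (n:ℝ) * Real.log n := hL
      _ ≤ (n:ℝ) * ((n:ℝ) / Real.exp 1) := by
          exact mul_le_mul_of_nonneg_left hlog_le (by linarith)
      _ = (n:ℝ) ^ 2 / Real.exp 1 := by ring
  have hstep2 : (n:ℝ) ^ 2 / Real.exp 1 ≤ (n:ℝ) ^ 2 / ((5:ℝ)/2) := by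
    gcongr
  have hcast : (4:ℝ) * (n:ℝ) ^ 2 ≤ 5 * 2 ^ (n - 1) := by exact_mod_cast natsq n hn
  have hq1' : (2:ℝ) ^ (n - 1) ≤ (q:ℝ) := by exact_mod_cast hq1
  have h2Lq : 2 * L ≤ (q:ℝ) := by
    have : (n:ℝ) ^ 2 / ((5:ℝ)/2) ≤ (2:ℝ) ^ (n-1) / 2 := by linarith
    linarith
  have hlog43 : (0:ℝ) < Real.log (4 / 3) := Real.log_pos (by norm_num)
  have h2Lpos : (0:ℝ) < 2 * L := by linarith
  have h1 : Real.log (2 * L) ≤ (m:ℝ) * Real.log (4 / 3) := by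
    have := (div_le_iff₀ hlog43).1 hm
    calc Real.log (2 * L) = Real.log (2 * n * Real.log n) := by rw [hL]; ring_nf
      _ ≤ (m:ℝ) * Real.log (4 / 3) := this
  have hgeL : 2 * L ≤ ((4:ℝ)/3) ^ m := by
    have h2 := Real.exp_le_exp.2 h1
    rw [Real.exp_log h2Lpos, ← Real.log_pow, Real.exp_log (by positivity)] at h2
    exact h2
  have h34 : ((3:ℝ)/4) ^ m * L ≤ 1 / 2 := by
    have hp4 : (0:ℝ) < ((4:ℝ)/3) ^ m := by positivity
    have heq : ((3:ℝ)/4) ^ m = (((4:ℝ)/3) ^ m)⁻¹ := by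
      rw [← inv_pow]; norm_num
    rw [heq, inv_mul_le_iff₀ hp4]
    nlinarith
  -- main estimate
  have hqle : q ≤ 2 ^ (n + 1) := by
    have : 2 ^ n ≤ 2 ^ (n + 1) := Nat.pow_le_pow_right (by norm_num) (by omega)
    omega
  set Nr : ℝ := 2 ^ (n + 1) with hNr
  set A : ℝ := Nr - q with hA
  have hNrpos : (0:ℝ) < Nr := by positivity
  have hqNr : (q:ℝ) < Nr := by
    have : (q:ℝ) < 2 ^ n := by exact_mod_cast hq2
    have h2 : (2:ℝ) ^ n ≤ 2 ^ (n+1) := by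
      apply pow_le_pow_right₀ (by norm_num) (by omega)
    rw [hNr]; linarith
  have hNr4q : Nr ≤ 4 * q := by
    have : Nr = 4 * 2 ^ (n-1) := by
      rw [hNr, show n + 1 = (n-1) + 2 from by omega, pow_add]; ring
    linarith
  have hA0 : (0:ℝ) ≤ A := by rw [hA]; linarith
  have hA34 : A ≤ 3/4 * Nr := by rw [hA]; linarith
  have hqpos : (0:ℝ) < q := by exact_mod_cast hq0
  have hC : (C:ℝ) ≤ A ^ m + ∑ j ∈ range m, A ^ j * Nr ^ (m - 1 - j) := by
    calc (C:ℝ) ≤ (((2 ^ (n + 1) - q) ^ m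
        + ∑ j ∈ range m, (2 ^ (n + 1) - q) ^ j * (2 ^ (n + 1)) ^ (m - 1 - j) : ℕ) : ℝ) :=
          Nat.cast_le.2 hcb
      _ = A ^ m + ∑ j ∈ range m, A ^ j * Nr ^ (m - 1 - j) := by
          push_cast [Nat.cast_sub hqle]
          rfl
  have hb1 : A ^ m * L ≤ 1/2 * Nr ^ m := by
    have h1 : A ^ m ≤ (3/4) ^ m * Nr ^ m := by
      rw [← mul_pow]; exact pow_le_pow_left₀ hA0 hA34 m
    have h2 : A ^ m * L ≤ (3/4) ^ m * Nr ^ m * L :=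
      mul_le_mul_of_nonneg_right h1 (le_of_lt hLpos)
    have h3 : (3/4:ℝ) ^ m * Nr ^ m * L = ((3/4:ℝ) ^ m * L) * Nr ^ m := by ring
    have h4 : ((3/4:ℝ) ^ m * L) * Nr ^ m ≤ 1/2 * Nr ^ m :=
      mul_le_mul_of_nonneg_right h34 (by positivity)
    linarith
  set r : ℝ := A / Nr with hr
  have hr0 : 0 ≤ r := by positivity
  have hr1 : r < 1 := by rw [hr, div_lt_one hNrpos, hA]; linarith
  have hterm : ∀ j ∈ range m, A ^ j * Nr ^ (m - 1 - j) = Nr ^ (m - 1) * r ^ j := by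
    intro j hj
    have hjm : j < m := mem_range.1 hj
    calc A ^ j * Nr ^ (m - 1 - j) = (r * Nr) ^ j * Nr ^ (m - 1 - j) := by
          rw [hr, div_mul_cancel₀ _ (ne_of_gt hNrpos)]
      _ = r ^ j * (Nr ^ j * Nr ^ (m - 1 - j)) := by rw [mul_pow]; ring
      _ = r ^ j * Nr ^ (m - 1) := by
          rw [← pow_add, show j + (m - 1 - j) = m - 1 from by omega]
      _ = Nr ^ (m - 1) * r ^ j := mul_comm _ _
  have hgeom : ∑ j ∈ range m, r ^ j ≤ Nr / q := by
    have hrm : r ^ m ≤ 1 := pow_le_one₀ hr0 (le_of_lt hr1)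
    have h1r : 0 < 1 - r := by linarith
    have heq := geom_sum_eq (ne_of_lt hr1) m
    rw [heq]
    have heq2 : (r ^ m - 1) / (r - 1) = (1 - r ^ m) / (1 - r) := by
      rw [div_eq_div_iff (by linarith) (by linarith)]; ring
    rw [heq2]
    have h2 : (1 - r ^ m) / (1 - r) ≤ 1 / (1 - r) := by
      gcongr
      nlinarith [pow_nonneg hr0 m]
    have h1req : 1 - r = (q:ℝ) / Nr := by
      rw [hr, hA]
      field_simp
      ring
    calc (1 - r ^ m) / (1 - r) ≤ 1 / (1 - r) := h2
      _ = Nr / q := by rw [h1req, one_div_div]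
  have hb2 : (∑ j ∈ range m, A ^ j * Nr ^ (m - 1 - j)) * L ≤ 1/2 * Nr ^ m := by
    rw [Finset.sum_congr rfl hterm, ← Finset.mul_sum]
    have h1 : Nr ^ (m-1) * (∑ j ∈ range m, r ^ j) ≤ Nr ^ (m-1) * (Nr / q) :=
      mul_le_mul_of_nonneg_left hgeom (by positivity)
    have hmm : Nr ^ (m-1) * Nr = Nr ^ m := by
      rw [← pow_succ, show m - 1 + 1 = m from by omega]
    have hLq2 : L / q ≤ 1/2 := by
      rw [div_le_div_iff₀ hqpos (by norm_num : (0:ℝ) < 2)]; linarith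
    have h2 : Nr ^ (m-1) * (Nr / q) * L ≤ 1/2 * Nr ^ m := by
      calc Nr ^ (m-1) * (Nr / q) * L = (Nr ^ (m-1) * Nr) * (L / q) := by ring
        _ = Nr ^ m * (L / q) := by rw [hmm]
        _ ≤ Nr ^ m * (1/2) := mul_le_mul_of_nonneg_left hLq2 (by positivity)
        _ = 1/2 * Nr ^ m := by ring
    have h3 := mul_le_mul_of_nonneg_right h1 (le_of_lt hLpos)
    linarith
  have hfin := mul_le_mul_of_nonneg_right hC (le_of_lt hLpos)
  rw [add_mul] at hfin
  rw [pow_mul]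
  show (C:ℝ) * L ≤ Nr ^ m
  linarith
end

section
/- Let n ≥ 6 and let p, q be primes with p = 2·q + 1 and 2^(n−1) ≤ q < 2^n. Then there exist a natural number n' with (n' : ℝ) ≤ 24·n·Real.log n and a map φ : (Fin n' → Bool) → ZMod p such that: (i) φ(z) ^ q = 1 for every z (so φ takes values in the order-q subgroup G of (ZMod p)ˣ); (ii) for all a, a' ∈ ZMod p with a ^ q = 1, a' ^ q = 1, a ≠ 1 and a' ≠ 1, the fibers satisfy card(φ⁻¹(a)) = card(φ⁻¹(a')); and (iii) card(φ⁻¹(1)) · (n · Real.log n) ≤ 2^(n'). In particular, the uniform distribution on {0,1}^(n') induces the uniform distribution on G \ {1}, and the identity is hit with probability at most (n·log n)⁻¹. -/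
/-- Numeric helper: `(2^n + 2^(2n+1)) * (n * (n-1)) ≤ 2^(3n)` for `n ≥ 6`. -/
lemma stmt8_numeric : ∀ n : ℕ, 6 ≤ n → (2 ^ n + 2 ^ (2 * n + 1)) * (n * (n - 1)) ≤ 2 ^ (3 * n) := by
  intro n hn
  induction n, hn using Nat.le_induction with
  | base => norm_num
  | succ m hm ih =>
    have h1 : 2 ^ (m + 1) + 2 ^ (2 * (m + 1) + 1) ≤ 4 * (2 ^ m + 2 ^ (2 * m + 1)) := by
      ring_nf
      nlinarith [Nat.zero_le (2 ^ m), Nat.zero_le (2 ^ (m * 2))]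
    have h2 : (m + 1) * ((m + 1) - 1) ≤ 2 * (m * (m - 1)) := by
      obtain ⟨s, rfl⟩ : ∃ s, m = s + 1 := ⟨m - 1, by omega⟩
      simp only [Nat.add_sub_cancel]
      nlinarith [hm]
    calc (2 ^ (m+1) + 2 ^ (2*(m+1)+1)) * ((m+1) * ((m+1) - 1))
        ≤ (4 * (2 ^ m + 2 ^ (2*m+1))) * (2 * (m * (m-1))) := Nat.mul_le_mul h1 h2
      _ = 8 * ((2 ^ m + 2 ^ (2*m+1)) * (m * (m-1))) := by ring
      _ ≤ 8 * 2 ^ (3 * m) := Nat.mul_le_mul_left 8 ih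
      _ = 2 ^ (3 * (m + 1)) := by rw [Nat.mul_succ, pow_add]; ring

/-- Existence of a concept-friendly embedding (with explicit constants): for a safe
prime `p = 2q + 1` with `2^(n-1) ≤ q < 2^n` and `n ≥ 6`, there is an `n'` with
`n' ≤ 24 n log n` and a map `φ` from bitstrings of length `n'` into the order-`q`
subgroup of `(ZMod p)ˣ` whose fibers over non-identity subgroup elements all have
equal cardinality, and whose fiber over the identity has mass at most
`(n log n)⁻¹`. -/
theorem stmt8 (n p q : ℕ) (hn : 6 ≤ n) (hp : p.Prime) (hq : q.Prime)
    (hpq : p = 2 * q + 1) (hq1 : 2 ^ (n - 1) ≤ q) (hq2 : q < 2 ^ n) :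
    ∃ (n' : ℕ) (φ : (Fin n' → Bool) → ZMod p),
      (n' : ℝ) ≤ 24 * n * Real.log n ∧
      (∀ z : Fin n' → Bool, φ z ^ q = 1) ∧
      (∀ a a' : ZMod p, a ^ q = 1 → a' ^ q = 1 → a ≠ 1 → a' ≠ 1 →
        Nat.card {z : Fin n' → Bool // φ z = a}
          = Nat.card {z : Fin n' → Bool // φ z = a'}) ∧
      ((Nat.card {z : Fin n' → Bool // φ z = 1} : ℝ) * (n * Real.log n)
        ≤ 2 ^ (n' : ℕ)) := by
  haveI : Fact p.Prime := ⟨hp⟩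
  have hq0 : 0 < q := hq.pos
  have hq2' : 2 ≤ q := hq.two_le
  set N : ℕ := 3 * n with hN
  -- enumeration of bitstrings
  let e : (Fin N → Bool) ≃ Fin (2 ^ N) :=
    (Equiv.arrowCongr (Equiv.refl (Fin N)) finTwoEquiv.symm).trans finFunctionFinEquiv
  -- generator of the order-q subgroup
  obtain ⟨u, hu⟩ := IsCyclic.exists_generator (α := (ZMod p)ˣ)
  have hcard : Nat.card (ZMod p)ˣ = 2 * q := by
    rw [Nat.card_eq_fintype_card, ZMod.card_units p, hpq]; omega
  have hou : orderOf u = 2 * q := by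
    rw [orderOf_eq_card_of_forall_mem_zpowers hu, hcard]
  set g : (ZMod p)ˣ := u ^ 2 with hg
  have hgq : g ^ q = 1 := by
    rw [hg, ← pow_mul, ← hou, pow_orderOf_eq_one]
  have hgne : g ≠ 1 := by
    intro h
    have : orderOf u ∣ 2 := orderOf_dvd_of_pow_eq_one h
    rw [hou] at this
    have := Nat.le_of_dvd (by norm_num) this
    omega
  have hog : orderOf g = q := by
    have hd : orderOf g ∣ q := orderOf_dvd_of_pow_eq_one hgq
    rcases (Nat.Prime.eq_one_or_self_of_dvd hq _ hd) with h | h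
    · exact absurd (orderOf_eq_one_iff.mp h) hgne
    · exact h
  set M : ℕ := 2 ^ N / q with hM
  have hqM : q * M ≤ 2 ^ N := by
    rw [hM, mul_comm]; exact Nat.div_mul_le_self _ _
  -- the map
  set φ : (Fin N → Bool) → ZMod p := fun z =>
    if ((e z : ℕ) < q * M) then ((g ^ ((e z : ℕ) % q) : (ZMod p)ˣ) : ZMod p) else 1 with hφ
  -- every value satisfies x ^ q = 1
  have hval : ∀ z : Fin N → Bool, φ z ^ q = 1 := by
    intro z
    rw [hφ]
    dsimp only
    split
    · rw [← Units.val_pow_eq_pow_val, ← pow_mul, mul_comm, pow_mul, hgq, one_pow, Units.val_one]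
    · exact one_pow q
  -- counting lemma: fibers of the index map
  have count : ∀ i : ℕ, i < q →
      Nat.card {k : Fin (2 ^ N) // (k : ℕ) < q * M ∧ (k : ℕ) % q = i} = M := by
    intro i hi
    have eqv : {k : Fin (2 ^ N) // (k : ℕ) < q * M ∧ (k : ℕ) % q = i} ≃ Fin M :=
      { toFun := fun k => ⟨(k : ℕ) / q, Nat.div_lt_of_lt_mul k.2.1⟩
        invFun := fun j => ⟨⟨(j : ℕ) * q + i, by
          have hj : (j : ℕ) < M := j.2
          have h1 : (j : ℕ) * q + i < q * M := by
            calc (j : ℕ) * q + i < (j : ℕ) * q + q := by omega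
              _ = ((j : ℕ) + 1) * q := by ring
              _ ≤ M * q := Nat.mul_le_mul_right q (by omega)
              _ = q * M := mul_comm _ _
          exact lt_of_lt_of_le h1 hqM⟩, by
          constructor
          · show (j : ℕ) * q + i < q * M
            calc (j : ℕ) * q + i < (j : ℕ) * q + q := by omega
              _ = ((j : ℕ) + 1) * q := by ring
              _ ≤ M * q := Nat.mul_le_mul_right q (by omega)
              _ = q * M := mul_comm _ _
          · show ((j : ℕ) * q + i) % q = i
            rw [Nat.mul_add_mod', Nat.mod_eq_of_lt hi]⟩
        left_inv := fun k => by
          ext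
          show (k : ℕ) / q * q + i = (k : ℕ)
          have h1 := k.2.2
          have h2 := Nat.div_add_mod (k : ℕ) q
          have h3 : (k : ℕ) / q * q = q * ((k : ℕ) / q) := Nat.mul_comm _ _
          omega
        right_inv := fun j => by
          ext
          show ((j : ℕ) * q + i) / q = (j : ℕ)
          rw [mul_comm, Nat.mul_add_div hq0, Nat.div_eq_of_lt hi, add_zero] }
    rw [Nat.card_congr eqv, Nat.card_eq_fintype_card, Fintype.card_fin]
  -- every q-th root of unity other than 1 is g^i with 0 < i < q
  have repr : ∀ a : ZMod p, a ^ q = 1 → a ≠ 1 →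
      ∃ i : ℕ, 0 < i ∧ i < q ∧ a = ((g ^ i : (ZMod p)ˣ) : ZMod p) := by
    intro a haq hane
    have ha0 : a ≠ 0 := by
      intro h
      rw [h, zero_pow hq0.ne'] at haq
      exact zero_ne_one haq
    have hIsU : IsUnit a := isUnit_iff_ne_zero.mpr ha0
    set au : (ZMod p)ˣ := hIsU.unit with hau
    have hauval : (au : ZMod p) = a := hIsU.unit_spec
    have hauq : au ^ q = 1 := by
      apply Units.ext
      rw [Units.val_pow_eq_pow_val, hauval, haq, Units.val_one]
    obtain ⟨m, hm⟩ := (mem_powers_iff_mem_zpowers).mpr (hu au)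
    replace hm : u ^ m = au := hm
    -- orderOf u ∣ m * q
    have hdvd : 2 * q ∣ m * q := by
      rw [← hou]
      apply orderOf_dvd_of_pow_eq_one
      rw [pow_mul, hm, hauq]
    have h2m : 2 ∣ m := by
      rcases hdvd with ⟨c, hc⟩
      have : m = 2 * c := by
        have hq0' : q ≠ 0 := hq0.ne'
        have : m * q = 2 * c * q := by rw [hc]; ring
        exact Nat.eq_of_mul_eq_mul_right hq0 this
      exact ⟨c, this⟩
    obtain ⟨t, ht⟩ := h2m
    have hgt : g ^ t = au := by
      rw [hg, ← pow_mul, ← ht, hm]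
    set i : ℕ := t % q with hi
    have higt : g ^ i = au := by
      rw [hi, ← hog, pow_mod_orderOf, hgt]
    have hilt : i < q := Nat.mod_lt _ hq0
    have hipos : 0 < i := by
      rcases Nat.eq_zero_or_pos i with h | h
      · exfalso
        rw [h, pow_zero] at higt
        apply hane
        rw [← hauval, ← higt, Units.val_one]
      · exact h
    exact ⟨i, hipos, hilt, by rw [higt, hauval]⟩
  -- fiber characterization for non-identity elements
  have fiber_card : ∀ a : ZMod p, a ^ q = 1 → a ≠ 1 →
      Nat.card {z : Fin N → Bool // φ z = a} = M := by
    intro a haq hane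
    obtain ⟨i, hipos, hilt, hai⟩ := repr a haq hane
    have hchar : ∀ z : Fin N → Bool,
        φ z = a ↔ ((e z : ℕ) < q * M ∧ (e z : ℕ) % q = i) := by
      intro z
      rw [hφ]
      dsimp only
      split
      case isTrue h =>
        constructor
        · intro heq
          refine ⟨h, ?_⟩
          rw [hai] at heq
          have : g ^ ((e z : ℕ) % q) = g ^ i := Units.ext heq
          exact pow_injOn_Iio_orderOf (by rw [hog]; exact Set.mem_Iio.mpr (Nat.mod_lt _ hq0))
            (by rw [hog]; exact Set.mem_Iio.mpr hilt) this
        · intro ⟨_, hmod⟩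
          rw [hmod, hai]
      case isFalse h =>
        constructor
        · intro heq; exact absurd heq.symm hane
        · intro ⟨hlt, _⟩; exact absurd hlt h
    have eqv : {z : Fin N → Bool // φ z = a} ≃
        {k : Fin (2 ^ N) // (k : ℕ) < q * M ∧ (k : ℕ) % q = i} :=
      e.subtypeEquiv (fun z => by rw [hchar z])
    rw [Nat.card_congr eqv, count i hilt]
  -- bound on the identity fiber
  have fiber_one : Nat.card {z : Fin N → Bool // φ z = 1} ≤ 2 ^ N % q + M := by
    have hmem : ∀ z : Fin N → Bool, φ z = 1 →
        (q * M ≤ (e z : ℕ)) ∨ ((e z : ℕ) < q * M ∧ (e z : ℕ) % q = 0) := by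
      intro z hz
      rw [hφ] at hz
      dsimp only at hz
      by_cases h : (e z : ℕ) < q * M
      · right
        refine ⟨h, ?_⟩
        rw [if_pos h] at hz
        have : g ^ ((e z : ℕ) % q) = 1 := Units.ext (by rw [hz, Units.val_one])
        have hd : orderOf g ∣ (e z : ℕ) % q := orderOf_dvd_of_pow_eq_one this
        rw [hog] at hd
        exact Nat.eq_zero_of_dvd_of_lt hd (Nat.mod_lt (e z : ℕ) hq0)
      · left; omega
    -- inject the identity fiber into a sum
    let f : {z : Fin N → Bool // φ z = 1} →
        {k : Fin (2 ^ N) // q * M ≤ (k : ℕ)} ⊕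
        {k : Fin (2 ^ N) // (k : ℕ) < q * M ∧ (k : ℕ) % q = 0} := fun z =>
      if h : q * M ≤ (e z.1 : ℕ) then Sum.inl ⟨e z.1, h⟩
      else Sum.inr ⟨e z.1, by
        rcases hmem z.1 z.2 with h' | h'
        · exact absurd h' h
        · exact h'⟩
    have hf : Function.Injective f := by
      intro z1 z2 hf12
      have : e z1.1 = e z2.1 := by
        by_cases h1 : q * M ≤ (e z1.1 : ℕ) <;> by_cases h2 : q * M ≤ (e z2.1 : ℕ) <;>
          simp only [f, dif_pos, dif_neg, h1, h2] at hf12 <;>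
          first
            | exact congrArg Subtype.val (Sum.inl.inj hf12)
            | exact congrArg Subtype.val (Sum.inr.inj hf12)
            | exact absurd hf12 (by simp)
      exact Subtype.ext (e.injective this)
    have hle := Nat.card_le_card_of_injective f hf
    rw [Nat.card_sum] at hle
    have h1 : Nat.card {k : Fin (2 ^ N) // q * M ≤ (k : ℕ)} = 2 ^ N - q * M := by
      have eqv : {k : Fin (2 ^ N) // q * M ≤ (k : ℕ)} ≃ Fin (2 ^ N - q * M) :=
        { toFun := fun k => ⟨(k : ℕ) - q * M, by have := k.1.2; have := k.2; omega⟩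
          invFun := fun j => ⟨⟨(j : ℕ) + q * M, by have := j.2; omega⟩, by
            show q * M ≤ (j : ℕ) + q * M; omega⟩
          left_inv := fun k => by
            ext; show (k : ℕ) - q * M + q * M = (k : ℕ); have := k.2; omega
          right_inv := fun j => by
            ext; show (j : ℕ) + q * M - q * M = (j : ℕ); omega }
      rw [Nat.card_congr eqv, Nat.card_eq_fintype_card, Fintype.card_fin]
    have h2 : Nat.card {k : Fin (2 ^ N) // (k : ℕ) < q * M ∧ (k : ℕ) % q = 0} = M :=
      count 0 hq0
    have hmod : 2 ^ N - q * M = 2 ^ N % q := by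
      have h := Nat.mod_add_div (2 ^ N) q
      have h' : q * M = q * (2 ^ N / q) := by rw [hM]
      omega
    rw [h1, h2] at hle
    rw [← hmod]
    exact hle
  -- now assemble
  refine ⟨N, φ, ?_, hval, ?_, ?_⟩
  · -- N ≤ 24 n log n
    have hlog1 : (1 : ℝ) ≤ Real.log n := by
      rw [Real.le_log_iff_exp_le (by positivity)]
      calc Real.exp 1 ≤ 3 := by
            have := Real.exp_one_lt_d9
            linarith
        _ ≤ (n : ℝ) := by exact_mod_cast by omega
    have hn0 : (0 : ℝ) < n := by positivity
    calc (N : ℝ) = 3 * n := by rw [hN]; push_cast; ring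
      _ ≤ 24 * n * 1 := by nlinarith
      _ ≤ 24 * n * Real.log n := by nlinarith
  · -- equal fibers
    intro a a' ha ha' hane hane'
    rw [fiber_card a ha hane, fiber_card a' ha' hane']
  · -- identity fiber bound
    have hB : Nat.card {z : Fin N → Bool // φ z = 1} ≤ 2 ^ n + 2 ^ (2 * n + 1) := by
      have hmq : 2 ^ N % q < q := Nat.mod_lt _ hq0
      have hMle : M ≤ 2 ^ (2 * n + 1) := by
        have h1 : M ≤ 2 ^ N / 2 ^ (n - 1) := Nat.div_le_div_left hq1 (by positivity)
        have h2 : 2 ^ N / 2 ^ (n - 1) = 2 ^ (N - (n - 1)) :=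
          Nat.pow_div (by omega) (by norm_num)
        have h3 : N - (n - 1) = 2 * n + 1 := by omega
        rw [h2, h3] at h1
        exact h1
      have := fiber_one
      omega
    have hlog0 : (0 : ℝ) ≤ Real.log n := Real.log_nonneg (by exact_mod_cast by omega)
    have hlogle : Real.log n ≤ (n : ℝ) - 1 := by
      have := Real.log_le_sub_one_of_pos (x := (n : ℝ)) (by positivity)
      linarith
    have hkey : ((2 ^ n + 2 ^ (2 * n + 1)) * (n * (n - 1)) : ℕ) ≤ 2 ^ (3 * n) :=
      stmt8_numeric n hn
    have hkeyR : ((2 ^ n + 2 ^ (2 * n + 1) : ℕ) : ℝ) * ((n : ℝ) * ((n : ℝ) - 1)) ≤ 2 ^ (3 * n) := by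
      have hc : ((n : ℝ) - 1) = ((n - 1 : ℕ) : ℝ) := by
        rw [Nat.cast_sub (by omega)]; norm_num
      rw [hc]
      calc ((2 ^ n + 2 ^ (2 * n + 1) : ℕ) : ℝ) * ((n : ℝ) * ((n - 1 : ℕ) : ℝ))
          = (((2 ^ n + 2 ^ (2 * n + 1)) * (n * (n - 1)) : ℕ) : ℝ) := by push_cast; ring
        _ ≤ ((2 ^ (3 * n) : ℕ) : ℝ) := by exact_mod_cast hkey
        _ = 2 ^ (3 * n) := by push_cast; ring
    have hBR : (Nat.card {z : Fin N → Bool // φ z = 1} : ℝ) ≤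
        ((2 ^ n + 2 ^ (2 * n + 1) : ℕ) : ℝ) := by exact_mod_cast hB
    have hnlog : (0 : ℝ) ≤ (n : ℝ) * Real.log n := by positivity
    calc (Nat.card {z : Fin N → Bool // φ z = 1} : ℝ) * ((n : ℝ) * Real.log n)
        ≤ ((2 ^ n + 2 ^ (2 * n + 1) : ℕ) : ℝ) * ((n : ℝ) * Real.log n) :=
          mul_le_mul_of_nonneg_right hBR hnlog
      _ ≤ ((2 ^ n + 2 ^ (2 * n + 1) : ℕ) : ℝ) * ((n : ℝ) * ((n : ℝ) - 1)) := by
          apply mul_le_mul_of_nonneg_left _ (by positivity)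
          apply mul_le_mul_of_nonneg_left hlogle (by positivity)
      _ ≤ 2 ^ (3 * n) := hkeyR
      _ = 2 ^ N := by rw [hN]
end

section
/- Let H and H⋆ be real inner product spaces, N ∈ ℕ, Φ : Fin N → H, Ψ : Fin N → H⋆, y : Fin N → ℝ with (y k)² = 1 for all k, and C > 0, C⋆ > 0. Suppose (w, b, w⋆, b⋆) ∈ H × ℝ × H⋆ × ℝ is primal feasible, i.e., for every k: y k · (⟪w, Φ k⟫ + b) ≥ 1 − (⟪w⋆, Ψ k⟫ + b⋆) and ⟪w⋆, Ψ k⟫ + b⋆ ≥ 0. Suppose α, β : Fin N → ℝ are dual feasible, i.e., α k ≥ 0 and β k ≥ 0 for all k, ∑_k α k · y k = 0, and ∑_k (α k + β k − C) = 0. Then weak duality holds for SVM+: ∑_k α k − (1/2)·∑_{k,k'} α k · α k' · y k · y k' · ⟪Φ k, Φ k'⟫ − (1/(2·C⋆))·∑_{k,k'} (α k + β k − C)·(α k' + β k' − C)·⟪Ψ k, Ψ k'⟫ ≤ (1/2)·‖w‖² + (C⋆/2)·‖w⋆‖² + C·∑_k (⟪w⋆, Ψ k⟫ + b⋆). -/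
open RealInnerProductSpace

lemma quad_sum_eq {H : Type*} [NormedAddCommGroup H] [InnerProductSpace ℝ H]
    (N : ℕ) (a : Fin N → ℝ) (f : Fin N → H) :
    ∑ k, ∑ k', a k * a k' * ⟪f k, f k'⟫ = ‖∑ k, a k • f k‖ ^ 2 := by
  rw [← real_inner_self_eq_norm_sq, sum_inner]
  refine Finset.sum_congr rfl fun k _ => ?_
  rw [inner_sum]
  refine Finset.sum_congr rfl fun k' _ => ?_
  rw [real_inner_smul_left, real_inner_smul_right]; ring

/-- Weak duality for SVM+ (support vector machine with privileged information):
every dual feasible value of the SVM+ dual objective lower-bounds every primal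
feasible value of the SVM+ primal objective. -/
theorem stmt10 {H Hs : Type*} [NormedAddCommGroup H] [InnerProductSpace ℝ H]
    [NormedAddCommGroup Hs] [InnerProductSpace ℝ Hs]
    (N : ℕ) (Φ : Fin N → H) (Ψ : Fin N → Hs) (y : Fin N → ℝ)
    (hy : ∀ k, (y k) ^ 2 = 1) (C Cs : ℝ) (hC : 0 < C) (hCs : 0 < Cs)
    (w : H) (b : ℝ) (ws : Hs) (bs : ℝ)
    (hfeas1 : ∀ k, y k * (⟪w, Φ k⟫ + b) ≥ 1 - (⟪ws, Ψ k⟫ + bs))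
    (hfeas2 : ∀ k, ⟪ws, Ψ k⟫ + bs ≥ 0)
    (α β : Fin N → ℝ) (hα : ∀ k, 0 ≤ α k) (hβ : ∀ k, 0 ≤ β k)
    (hsum1 : ∑ k, α k * y k = 0) (hsum2 : ∑ k, (α k + β k - C) = 0) :
    ∑ k, α k
      - (1 / 2) * ∑ k, ∑ k', α k * α k' * y k * y k' * ⟪Φ k, Φ k'⟫
      - (1 / (2 * Cs)) * ∑ k, ∑ k',
          (α k + β k - C) * (α k' + β k' - C) * ⟪Ψ k, Ψ k'⟫
      ≤ (1 / 2) * ‖w‖ ^ 2 + (Cs / 2) * ‖ws‖ ^ 2 + C * ∑ k, (⟪ws, Ψ k⟫ + bs) := by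
  set u : H := ∑ k, (α k * y k) • Φ k with hu
  set v : Hs := ∑ k, (α k + β k - C) • Ψ k with hv
  have hΦsum : ∑ k, ∑ k', α k * α k' * y k * y k' * ⟪Φ k, Φ k'⟫ = ‖u‖ ^ 2 := by
    rw [hu, ← quad_sum_eq N (fun k => α k * y k) Φ]
    refine Finset.sum_congr rfl fun k _ => Finset.sum_congr rfl fun k' _ => by ring
  have hΨsum : ∑ k, ∑ k', (α k + β k - C) * (α k' + β k' - C) * ⟪Ψ k, Ψ k'⟫
      = ‖v‖ ^ 2 := quad_sum_eq N _ Ψ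
  have hwu : ⟪w, u⟫ = ∑ k, (α k * y k) * ⟪w, Φ k⟫ := by
    rw [hu, inner_sum]
    exact Finset.sum_congr rfl fun k _ => real_inner_smul_right _ _ _
  have hwsv : ⟪ws, v⟫ = ∑ k, (α k + β k - C) * ⟪ws, Ψ k⟫ := by
    rw [hv, inner_sum]
    exact Finset.sum_congr rfl fun k _ => real_inner_smul_right _ _ _
  have key : ∑ k, α k ≤ ⟪w, u⟫ + ⟪ws, v⟫ + C * ∑ k, (⟪ws, Ψ k⟫ + bs) := by
    have h1 : ∀ k, α k ≤ α k * (y k * (⟪w, Φ k⟫ + b) + (⟪ws, Ψ k⟫ + bs))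
        + β k * (⟪ws, Ψ k⟫ + bs) := by
      intro k
      have := hfeas1 k
      have := hfeas2 k
      nlinarith [mul_le_mul_of_nonneg_left (hfeas1 k) (hα k),
        mul_nonneg (hβ k) (hfeas2 k)]
    calc ∑ k, α k ≤ ∑ k, (α k * (y k * (⟪w, Φ k⟫ + b) + (⟪ws, Ψ k⟫ + bs))
          + β k * (⟪ws, Ψ k⟫ + bs)) := Finset.sum_le_sum fun k _ => h1 k
      _ = ∑ k, ((α k * y k) * ⟪w, Φ k⟫) + b * ∑ k, α k * y k
          + ∑ k, ((α k + β k - C) * ⟪ws, Ψ k⟫) + bs * ∑ k, (α k + β k - C)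
          + C * ∑ k, (⟪ws, Ψ k⟫ + bs) := by
        rw [Finset.mul_sum, Finset.mul_sum, Finset.mul_sum,
          ← Finset.sum_add_distrib, ← Finset.sum_add_distrib,
          ← Finset.sum_add_distrib, ← Finset.sum_add_distrib]
        exact Finset.sum_congr rfl fun k _ => by ring
      _ = ⟪w, u⟫ + ⟪ws, v⟫ + C * ∑ k, (⟪ws, Ψ k⟫ + bs) := by
        rw [hsum1, hsum2, hwu, hwsv]; ring
  have h2 : ⟪w, u⟫ - (1 / 2) * ‖u‖ ^ 2 ≤ (1 / 2) * ‖w‖ ^ 2 := by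
    have h := real_inner_self_nonneg (x := w - u)
    rw [real_inner_sub_sub_self] at h
    rw [real_inner_self_eq_norm_sq, real_inner_self_eq_norm_sq] at h
    nlinarith
  have h3 : ⟪ws, v⟫ - (1 / (2 * Cs)) * ‖v‖ ^ 2 ≤ (Cs / 2) * ‖ws‖ ^ 2 := by
    have h := real_inner_self_nonneg (x := Cs • ws - v)
    rw [real_inner_sub_sub_self, real_inner_smul_left, real_inner_smul_right,
      real_inner_smul_left] at h
    rw [real_inner_self_eq_norm_sq, real_inner_self_eq_norm_sq] at h
    have hCs' : (0:ℝ) < 2 * Cs := by linarith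
    have h' : 1 / (2 * Cs) * ‖v‖ ^ 2 * (2 * Cs) = ‖v‖ ^ 2 := by
      field_simp
    nlinarith [h, h', hCs']
  rw [hΦsum, hΨsum]
  linarith
end
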